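/- arXiv:2409.17184 — 7 statements merged into one kernel-verified Lean document; each statement's English description precedes it below -/
import Mathlib

section
/- If (V, l, r) is a representation of an anti-Leibniz algebra (A, {·,·}), then (V*, l*, l* - r*) is a representation of A, where l*, r*: A → End(V*) are defined by ⟨l*(x)ξ, v⟩ = ⟨ξ, l(x)v⟩ and ⟨r*(x)ξ, v⟩ = ⟨ξ, r(x)v⟩. -/
/-!
Transposition `f ↦ f*` is additive and reverses products, so each identity for
`(V*, l*, l* - r*)` is the transpose of an identity in `End V`: of the one for `l({x,y})`, whose
right side is symmetric in the order of the two products; of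
`l({x,y}) - r({x,y}) = -(l(y) - r(y)) l(x) - l(x) (l(y) - r(y))`; and of
`l(x) (l(y) - r(y)) = (l(x) - r(x)) (l(y) - r(y))`, which is `r(x) l(y) = r(x) r(y)`.
-/

namespace LinearMap

variable {R M N : Type*} [CommRing R] [AddCommGroup M] [Module R M] [AddCommGroup N] [Module R N]

theorem dualMap_neg (f : M →ₗ[R] N) : (-f).dualMap = -f.dualMap := by
  ext; simp [dualMap_apply]

theorem dualMap_sub (f g : M →ₗ[R] N) : (f - g).dualMap = f.dualMap - g.dualMap := by
  ext; simp [dualMap_apply]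

theorem dualMap_mul (f g : Module.End R M) : (f * g).dualMap = g.dualMap * f.dualMap := rfl

end LinearMap

section AntiLeibniz

variable {R A V : Type*} [CommRing R] [AddCommGroup V] [Module R V]

structure IsAntiLeibnizRep (b : A → A → A) (l r : A → Module.End R V) : Prop where
  left_bracket : ∀ x y, l (b x y) = -(l x * l y) - l y * l x
  right_bracket : ∀ x y, r (b x y) = -(l x * r y) - r y * l x
  right_mul_left : ∀ x y, r y * l x = r y * r x

open LinearMap in
theorem IsAntiLeibnizRep.dual {b : A → A → A} {l r : A → Module.End R V}
    (h : IsAntiLeibnizRep b l r) :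
    IsAntiLeibnizRep b (fun x => (l x).dualMap) (fun x => (l x).dualMap - (r x).dualMap) where
  left_bracket x y := by
    rw [h.left_bracket, neg_sub_comm, dualMap_sub, dualMap_neg, dualMap_mul, dualMap_mul]
  right_bracket x y := by
    have key : l (b x y) - r (b x y) = -((l y - r y) * l x) - l x * (l y - r y) := by
      rw [h.left_bracket, h.right_bracket]
      noncomm_ring
    rw [← dualMap_sub, key, dualMap_sub, dualMap_neg, dualMap_mul, dualMap_mul, dualMap_sub]
  right_mul_left x y := by
    have key : l x * (l y - r y) = (l x - r x) * (l y - r y) := by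
      rw [sub_mul _ (r x), mul_sub (r x), ← h.right_mul_left y x, sub_self, sub_zero]
    rw [← dualMap_sub, ← dualMap_mul, ← dualMap_sub, ← dualMap_mul, key]

end AntiLeibniz

theorem stmt_10_general (K : Type*) [Field K]
    (A : Type*) [AddCommGroup A] [Module K A]
    (V : Type*) [AddCommGroup V] [Module K V]
    (b : A →ₗ[K] A →ₗ[K] A)
    (l r : A →ₗ[K] Module.End K V)
    (h1 : ∀ x y : A, l (b x y) = -(l x * l y) - l y * l x)
    (h2 : ∀ x y : A, r (b x y) = -(l x * r y) - r y * l x)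
    (h3 : ∀ x y : A, r y * l x = r y * r x)
    (L R : A → Module.Dual K V →ₗ[K] Module.Dual K V)
    (hL : L = fun x => (l x).dualMap)
    (hR : R = fun x => (l x).dualMap - (r x).dualMap) :
    (∀ (x y : A) (ξ : Module.Dual K V),
        L (b x y) ξ = -(L x (L y ξ)) - L y (L x ξ)) ∧
    (∀ (x y : A) (ξ : Module.Dual K V),
        R (b x y) ξ = -(L x (R y ξ)) - R y (L x ξ)) ∧
    (∀ (x y : A) (ξ : Module.Dual K V),
        R y (L x ξ) = R y (R x ξ)) := by
  subst hL hR
  have hdual := (IsAntiLeibnizRep.mk (b := fun x y => b x y) h1 h2 h3).dual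
  exact ⟨fun x y ξ => congr($(hdual.left_bracket x y) ξ),
    fun x y ξ => congr($(hdual.right_bracket x y) ξ),
    fun x y ξ => congr($(hdual.right_mul_left x y) ξ)⟩

theorem stmt_10 (K : Type*) [Field K] [CharZero K]
    (A : Type*) [AddCommGroup A] [Module K A]
    (V : Type*) [AddCommGroup V] [Module K V]
    (b : A →ₗ[K] A →ₗ[K] A)
    (hleib : ∀ x y z : A, b x (b y z) = -(b (b x y) z) - b y (b x z))
    (l r : A →ₗ[K] Module.End K V)
    (h1 : ∀ x y : A, l (b x y) = -(l x * l y) - l y * l x)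
    (h2 : ∀ x y : A, r (b x y) = -(l x * r y) - r y * l x)
    (h3 : ∀ x y : A, r y * l x = r y * r x)
    (L R : A → Module.Dual K V →ₗ[K] Module.Dual K V)
    (hL : L = fun x => (l x).dualMap)
    (hR : R = fun x => (l x).dualMap - (r x).dualMap) :
    (∀ (x y : A) (ξ : Module.Dual K V),
        L (b x y) ξ = -(L x (L y ξ)) - L y (L x ξ)) ∧
    (∀ (x y : A) (ξ : Module.Dual K V),
        R (b x y) ξ = -(L x (R y ξ)) - R y (L x ξ)) ∧
    (∀ (x y : A) (ξ : Module.Dual K V),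
        R y (L x ξ) = R y (R x ξ)) :=
  stmt_10_general K A V b l r h1 h2 h3 L R hL hR
end

section
/- Given a mock-Lie algebra (A, ∘) with representation (V, π), the product {x+u, y+v} = x∘y + π(x)v on A ⊕ V makes A ⊕ V an anti-Leibniz algebra (the hemisemi-direct product). -/
/-!
The `A`-component of the hemisemi-direct product is the mock-Lie product itself, which is
anti-Leibniz because commutativity turns the Jacobi identity into
`x ∘ (y ∘ z) = -(x ∘ y) ∘ z - y ∘ (x ∘ z)`. The `V`-component only ever sees `π`, and the
anti-Leibniz identity there is the representation axiom `π (x ∘ y) = -π x π y - π y π x`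
applied to a vector.
-/

def IsAntiLeibniz {M : Type*} [Neg M] [Sub M] (P : M → M → M) : Prop :=
  ∀ x y z : M, P x (P y z) = -(P (P x y) z) - P y (P x z)

theorem isAntiLeibniz_of_comm_of_jacobi {A : Type*} [AddCommGroup A] (mul : A → A → A)
    (comm : ∀ x y : A, mul x y = mul y x)
    (jacobi : ∀ x y z : A, mul x (mul y z) + mul y (mul z x) + mul z (mul x y) = 0) :
    IsAntiLeibniz mul := by
  intro x y z
  have h := jacobi x y z
  rw [comm z x, comm z (mul x y)] at h
  rw [← sub_eq_zero, ← h]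
  abel

def hemisemidirectProduct {R A V : Type*} [Semiring R] [AddCommGroup V] [Module R V]
    (mul : A → A → A) (π : A → Module.End R V) (p q : A × V) : A × V :=
  (mul p.1 q.1, π p.1 q.2)

theorem isAntiLeibniz_hemisemidirectProduct {R A V : Type*} [Semiring R] [AddCommGroup A]
    [AddCommGroup V] [Module R V] {mul : A → A → A} {π : A → Module.End R V}
    (hmul : IsAntiLeibniz mul) (hrep : ∀ x y : A, π (mul x y) = -(π x * π y) - π y * π x) :
    IsAntiLeibniz (hemisemidirectProduct mul π) := by
  rintro ⟨x, u⟩ ⟨y, v⟩ ⟨z, w⟩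
  refine Prod.ext (hmul x y z) ?_
  change π x (π y w) = -(π (mul x y) w) - π y (π x w)
  rw [hrep]
  simp [Module.End.mul_apply]

theorem stmt_13_general (K : Type*) [Field K]
    (A : Type*) [AddCommGroup A] [Module K A]
    (V : Type*) [AddCommGroup V] [Module K V]
    (mul : A →ₗ[K] A →ₗ[K] A)
    (comm : ∀ x y : A, mul x y = mul y x)
    (jacobi : ∀ x y z : A, mul x (mul y z) + mul y (mul z x) + mul z (mul x y) = 0)
    (π : A →ₗ[K] Module.End K V)
    (hrep : ∀ x y : A, π (mul x y) = -(π x * π y) - π y * π x)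
    (P : A × V → A × V → A × V)
    (hP : P = fun p q => (mul p.1 q.1, π p.1 q.2)) :
    ∀ p q s : A × V, P p (P q s) = -(P (P p q) s) - P q (P p s) := by
  subst hP
  exact isAntiLeibniz_hemisemidirectProduct
    (isAntiLeibniz_of_comm_of_jacobi (fun x y => mul x y) comm jacobi) hrep

theorem stmt_13 (K : Type*) [Field K] [CharZero K]
    (A : Type*) [AddCommGroup A] [Module K A]
    (V : Type*) [AddCommGroup V] [Module K V]
    (mul : A →ₗ[K] A →ₗ[K] A)
    (comm : ∀ x y : A, mul x y = mul y x)
    (jacobi : ∀ x y z : A, mul x (mul y z) + mul y (mul z x) + mul z (mul x y) = 0)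
    (π : A →ₗ[K] Module.End K V)
    (hrep : ∀ x y : A, π (mul x y) = -(π x * π y) - π y * π x)
    (P : A × V → A × V → A × V)
    (hP : P = fun p q => (mul p.1 q.1, π p.1 q.2)) :
    ∀ p q s : A × V, P p (P q s) = -(P (P p q) s) - P q (P p s) :=
  stmt_13_general K A V mul comm jacobi π hrep P hP
end

section
/- A linear map K: V → A is an embedding tensor on a mock-Lie algebra (A, ∘) with representation (V, π) if and only if the map N_K: A ⊕ V → A ⊕ V, (x, u) ↦ (K(u), 0), is a Nijenhuis operator on the hemisemi-direct product anti-Leibniz algebra A ⊕ V with product {x+u, y+v} = x∘y + π(x)v. -/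
/-!
Only the `V`-coordinates of the arguments matter: writing `N = N_K`, the `V`-component of both sides
of the Nijenhuis identity at `(x, u), (y, v)` vanishes, and its `A`-component reads
`K u ∘ K v = K (π (K u) v)`, since `N` kills the `A`-summand and `π (x) 0 = 0`.
-/

section HemisemidirectProduct

variable {R A V : Type*} [CommRing R] [AddCommGroup A] [Module R A] [AddCommGroup V] [Module R V]

def IsEmbeddingTensor (mul : A →ₗ[R] A →ₗ[R] A) (π : A →ₗ[R] Module.End R V)
    (T : V →ₗ[R] A) : Prop :=
  ∀ u v : V, mul (T u) (T v) = T (π (T u) v)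

def IsNijenhuis {B : Type*} [AddCommGroup B] (μ : B → B → B) (N : B → B) : Prop :=
  ∀ a b : B, μ (N a) (N b) = N (μ (N a) b + μ a (N b) - N (μ a b))

def hemisemidirectMul (mul : A →ₗ[R] A →ₗ[R] A) (π : A →ₗ[R] Module.End R V)
    (p q : A × V) : A × V :=
  (mul p.1 q.1, π p.1 q.2)

def embeddingLift (T : V →ₗ[R] A) (p : A × V) : A × V :=
  (T p.2, 0)

theorem hemisemidirectMul_nijenhuis_iff (mul : A →ₗ[R] A →ₗ[R] A) (π : A →ₗ[R] Module.End R V)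
    (T : V →ₗ[R] A) (p q : A × V) :
    hemisemidirectMul mul π (embeddingLift T p) (embeddingLift T q) =
        embeddingLift T (hemisemidirectMul mul π (embeddingLift T p) q +
          hemisemidirectMul mul π p (embeddingLift T q) -
          embeddingLift T (hemisemidirectMul mul π p q)) ↔
      mul (T p.2) (T q.2) = T (π (T p.2) q.2) := by
  simp [hemisemidirectMul, embeddingLift]

theorem isEmbeddingTensor_iff_isNijenhuis (mul : A →ₗ[R] A →ₗ[R] A)
    (π : A →ₗ[R] Module.End R V) (T : V →ₗ[R] A) :
    IsEmbeddingTensor mul π T ↔ IsNijenhuis (hemisemidirectMul mul π) (embeddingLift T) := by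
  simp only [IsEmbeddingTensor, IsNijenhuis, hemisemidirectMul_nijenhuis_iff]
  exact ⟨fun h p q => h p.2 q.2, fun h u v => h (0, u) (0, v)⟩

end HemisemidirectProduct

theorem stmt_14_general (K : Type*) [Field K]
    (A : Type*) [AddCommGroup A] [Module K A]
    (V : Type*) [AddCommGroup V] [Module K V]
    (mul : A →ₗ[K] A →ₗ[K] A)
    (π : A →ₗ[K] Module.End K V)
    (T : V →ₗ[K] A)
    (P : A × V → A × V → A × V)
    (hP : P = fun p q => (mul p.1 q.1, π p.1 q.2))
    (N : A × V → A × V)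
    (hN : N = fun p => (T p.2, 0)) :
    (∀ u v : V, mul (T u) (T v) = T (π (T u) v)) ↔
    (∀ p q : A × V, P (N p) (N q) = N (P (N p) q + P p (N q) - N (P p q))) := by
  subst hP hN
  exact isEmbeddingTensor_iff_isNijenhuis mul π T

theorem stmt_14 (K : Type*) [Field K] [CharZero K]
    (A : Type*) [AddCommGroup A] [Module K A]
    (V : Type*) [AddCommGroup V] [Module K V]
    (mul : A →ₗ[K] A →ₗ[K] A)
    (comm : ∀ x y : A, mul x y = mul y x)
    (jacobi : ∀ x y z : A, mul x (mul y z) + mul y (mul z x) + mul z (mul x y) = 0)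
    (π : A →ₗ[K] Module.End K V)
    (hrep : ∀ x y : A, π (mul x y) = -(π x * π y) - π y * π x)
    (T : V →ₗ[K] A)
    (P : A × V → A × V → A × V)
    (hP : P = fun p q => (mul p.1 q.1, π p.1 q.2))
    (N : A × V → A × V)
    (hN : N = fun p => (T p.2, 0)) :
    (∀ u v : V, mul (T u) (T v) = T (π (T u) v)) ↔
    (∀ p q : A × V, P (N p) (N q) = N (P (N p) q + P p (N q) - N (P p q))) :=
  stmt_14_general K A V mul π T P hP N hN
end

section
/- If K: V → A is an embedding tensor on a mock-Lie algebra (A, ∘) with representation (V, π), then the bracket {u,v}_K := π(K(u))v makes V an anti-Leibniz algebra. -/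
section MockLieRepresentation

variable {R A V : Type*} [CommRing R] [AddCommGroup A] [Module R A]
  [AddCommGroup V] [Module R V]

theorem Module.End.apply_apply_eq_neg_of_map_mul {mul : A →ₗ[R] A →ₗ[R] A}
    {π : A →ₗ[R] Module.End R V} (hrep : ∀ x y : A, π (mul x y) = -(π x * π y) - π y * π x)
    (x y : A) (w : V) : π x (π y w) = -π (mul x y) w - π y (π x w) := by
  rw [hrep]
  simp only [LinearMap.sub_apply, LinearMap.neg_apply, Module.End.mul_apply]
  abel

theorem derivedBracket_antiLeibniz {mul : A →ₗ[R] A →ₗ[R] A}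
    {π : A →ₗ[R] Module.End R V} (hrep : ∀ x y : A, π (mul x y) = -(π x * π y) - π y * π x)
    {T : V →ₗ[R] A} (hT : ∀ u v : V, mul (T u) (T v) = T (π (T u) v)) (u v w : V) :
    π (T u) (π (T v) w) = -π (T (π (T u) v)) w - π (T v) (π (T u) w) := by
  rw [← hT]
  exact Module.End.apply_apply_eq_neg_of_map_mul hrep (T u) (T v) w

end MockLieRepresentation

theorem stmt_15_general (K : Type*) [Field K]
    (A : Type*) [AddCommGroup A] [Module K A]
    (V : Type*) [AddCommGroup V] [Module K V]
    (mul : A →ₗ[K] A →ₗ[K] A)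
    (π : A →ₗ[K] Module.End K V)
    (hrep : ∀ x y : A, π (mul x y) = -(π x * π y) - π y * π x)
    (T : V →ₗ[K] A)
    (hT : ∀ u v : V, mul (T u) (T v) = T (π (T u) v))
    (br : V → V → V) (hbr : br = fun u v => π (T u) v) :
    ∀ u v w : V, br u (br v w) = -(br (br u v) w) - br v (br u w) := by
  subst hbr
  exact derivedBracket_antiLeibniz hrep hT

theorem stmt_15 (K : Type*) [Field K] [CharZero K]
    (A : Type*) [AddCommGroup A] [Module K A]
    (V : Type*) [AddCommGroup V] [Module K V]
    (mul : A →ₗ[K] A →ₗ[K] A)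
    (comm : ∀ x y : A, mul x y = mul y x)
    (jacobi : ∀ x y z : A, mul x (mul y z) + mul y (mul z x) + mul z (mul x y) = 0)
    (π : A →ₗ[K] Module.End K V)
    (hrep : ∀ x y : A, π (mul x y) = -(π x * π y) - π y * π x)
    (T : V →ₗ[K] A)
    (hT : ∀ u v : V, mul (T u) (T v) = T (π (T u) v))
    (br : V → V → V) (hbr : br = fun u v => π (T u) v) :
    ∀ u v w : V, br u (br v w) = -(br (br u v) w) - br v (br u w) :=
  stmt_15_general K A V mul π hrep T hT br hbr
end

section
/- If (V, ρ, μ) is a representation of an anti-associative algebra (A, ⋆), then π := ρ + μ is a representation of the induced mock-Lie algebra (A, ∘) with x∘y = x⋆y + y⋆x, i.e. π(x∘y) = -π(x)π(y) - π(y)π(x). Moreover, any embedding tensor K: V → A for (A, ⋆, ρ, μ) is also an embedding tensor for (A, ∘, π). -/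
theorem repSum_map_add_swap {A E F : Type*} [AddCommGroup A] [Ring E]
    [FunLike F A E] [AddMonoidHomClass F A E]
    (star : A → A → A) (ρ μ : F)
    (hρ : ∀ x y : A, ρ x * ρ y = -ρ (star x y))
    (hμ : ∀ x y : A, μ y * μ x = -μ (star x y))
    (hμρ : ∀ x y : A, μ x * ρ y = -(ρ y * μ x)) (x y : A) :
    ρ (star x y + star y x) + μ (star x y + star y x) =
      -((ρ x + μ x) * (ρ y + μ y)) - (ρ y + μ y) * (ρ x + μ x) := by
  simp only [map_add, mul_add, add_mul]
  rw [hρ x y, hρ y x, hμ x y, hμ y x, hμρ x y, hμρ y x]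
  abel

theorem embeddingTensor_add_swap {A V : Type*} [AddCommGroup A] [AddCommGroup V]
    (star : A → A → A) (ρ μ : A → V →+ V) (T : V →+ A)
    (hT : ∀ u v : V, star (T u) (T v) = T (ρ (T u) v) ∧ star (T u) (T v) = T (μ (T v) u))
    (u v : V) :
    star (T u) (T v) + star (T v) (T u) = T ((ρ (T u) + μ (T u)) v) := by
  rw [(hT u v).1, (hT v u).2, AddMonoidHom.add_apply, map_add]

theorem stmt_16_general (K : Type*) [Field K]
    (A : Type*) [AddCommGroup A] [Module K A]
    (V : Type*) [AddCommGroup V] [Module K V]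
    (star : A →ₗ[K] A →ₗ[K] A)
    (ρ μ : A →ₗ[K] Module.End K V)
    (h1 : ∀ x y : A, ρ x * ρ y = -(ρ (star x y)))
    (h2 : ∀ x y : A, μ y * μ x = -(μ (star x y)))
    (h3 : ∀ x y : A, μ x * ρ y = -(ρ y * μ x))
    (o : A → A → A) (ho : o = fun x y => star x y + star y x)
    (π : A → Module.End K V) (hπ : π = fun x => ρ x + μ x)
    (T : V →ₗ[K] A)
    (hT : ∀ u v : V, star (T u) (T v) = T (ρ (T u) v) ∧ star (T u) (T v) = T (μ (T v) u)) :
    (∀ x y : A, π (o x y) = -(π x * π y) - π y * π x) ∧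
    (∀ u v : V, o (T u) (T v) = T (π (T u) v)) := by
  subst ho hπ
  exact ⟨repSum_map_add_swap (fun x y => star x y) ρ μ h1 h2 h3,
    embeddingTensor_add_swap (fun x y => star x y) (fun x => (ρ x).toAddMonoidHom)
      (fun x => (μ x).toAddMonoidHom) T.toAddMonoidHom hT⟩

theorem stmt_16 (K : Type*) [Field K] [CharZero K]
    (A : Type*) [AddCommGroup A] [Module K A]
    (V : Type*) [AddCommGroup V] [Module K V]
    (star : A →ₗ[K] A →ₗ[K] A)
    (antiassoc : ∀ x y z : A, star (star x y) z + star x (star y z) = 0)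
    (ρ μ : A →ₗ[K] Module.End K V)
    (h1 : ∀ x y : A, ρ x * ρ y = -(ρ (star x y)))
    (h2 : ∀ x y : A, μ y * μ x = -(μ (star x y)))
    (h3 : ∀ x y : A, μ x * ρ y = -(ρ y * μ x))
    (o : A → A → A) (ho : o = fun x y => star x y + star y x)
    (π : A → Module.End K V) (hπ : π = fun x => ρ x + μ x)
    (T : V →ₗ[K] A)
    (hT : ∀ u v : V, star (T u) (T v) = T (ρ (T u) v) ∧ star (T u) (T v) = T (μ (T v) u)) :
    (∀ x y : A, π (o x y) = -(π x * π y) - π y * π x) ∧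
    (∀ u v : V, o (T u) (T v) = T (π (T u) v)) :=
  stmt_16_general K A V star ρ μ h1 h2 h3 o ho π hπ T hT
end

section
/- If K: V → A is an embedding tensor on an anti-associative algebra (A, ⋆) with representation (V, ρ, μ), then the products u▷v := ρ(K(u))v and u◁v := μ(K(v))u make V an anti-associative dialgebra. -/
namespace EmbeddingTensor

variable {R A V : Type*} [CommSemiring R] [AddCommMonoid A] [Module R A]
  [AddCommGroup V] [Module R V]

/-- `u ▷ v := ρ (K u) v` -/
def rhd (ρ : A →ₗ[R] Module.End R V) (T : V →ₗ[R] A) (u v : V) : V := ρ (T u) v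

/-- `u ◁ v := μ (K v) u` -/
def lhd (μ : A →ₗ[R] Module.End R V) (T : V →ₗ[R] A) (u v : V) : V := μ (T v) u

variable {star : A →ₗ[R] A →ₗ[R] A} {ρ μ : A →ₗ[R] Module.End R V} {T : V →ₗ[R] A}

theorem rhd_antiassoc (hρ : ∀ x y : A, ρ x * ρ y = -ρ (star x y))
    (hT : ∀ u v : V, star (T u) (T v) = T (ρ (T u) v)) (u v w : V) :
    rhd ρ T (rhd ρ T u v) w + rhd ρ T u (rhd ρ T v w) = 0 := by
  rw [rhd, rhd, ← hT, ← neg_neg (ρ _), ← hρ]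
  simp [rhd]

theorem lhd_antiassoc (hμ : ∀ x y : A, μ y * μ x = -μ (star x y))
    (hT : ∀ u v : V, star (T u) (T v) = T (μ (T v) u)) (u v w : V) :
    lhd μ T (lhd μ T u v) w + lhd μ T u (lhd μ T v w) = 0 := by
  rw [lhd, lhd, lhd, lhd, ← hT, ← neg_neg (μ (star _ _)), ← hμ]
  simp

theorem rhd_lhd_antiassoc (hμρ : ∀ x y : A, μ x * ρ y = -(ρ y * μ x)) (u v w : V) :
    lhd μ T (rhd ρ T u v) w + rhd ρ T u (lhd μ T v w) = 0 := by
  rw [lhd, rhd, ← Module.End.mul_apply, hμρ]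
  simp [rhd, lhd]

end EmbeddingTensor

open EmbeddingTensor in
theorem stmt_17_general (K : Type*) [Field K]
    (A : Type*) [AddCommGroup A] [Module K A]
    (V : Type*) [AddCommGroup V] [Module K V]
    (star : A →ₗ[K] A →ₗ[K] A)
    (ρ μ : A →ₗ[K] Module.End K V)
    (h1 : ∀ x y : A, ρ x * ρ y = -(ρ (star x y)))
    (h2 : ∀ x y : A, μ y * μ x = -(μ (star x y)))
    (h3 : ∀ x y : A, μ x * ρ y = -(ρ y * μ x))
    (T : V →ₗ[K] A)
    (hT : ∀ u v : V, star (T u) (T v) = T (ρ (T u) v) ∧ star (T u) (T v) = T (μ (T v) u))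
    (r l : V → V → V)
    (hr : r = fun u v => ρ (T u) v) (hl : l = fun u v => μ (T v) u) :
    (∀ u v w : V, l (l u v) w + l u (l v w) = 0) ∧
    (∀ u v w : V, r (r u v) w + r u (r v w) = 0) ∧
    (∀ u v w : V, l (r u v) w + r u (l v w) = 0) := by
  subst hr hl
  exact ⟨lhd_antiassoc h2 fun u v => (hT u v).2, rhd_antiassoc h1 fun u v => (hT u v).1,
    rhd_lhd_antiassoc h3⟩

theorem stmt_17 (K : Type*) [Field K] [CharZero K]
    (A : Type*) [AddCommGroup A] [Module K A]
    (V : Type*) [AddCommGroup V] [Module K V]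
    (star : A →ₗ[K] A →ₗ[K] A)
    (antiassoc : ∀ x y z : A, star (star x y) z + star x (star y z) = 0)
    (ρ μ : A →ₗ[K] Module.End K V)
    (h1 : ∀ x y : A, ρ x * ρ y = -(ρ (star x y)))
    (h2 : ∀ x y : A, μ y * μ x = -(μ (star x y)))
    (h3 : ∀ x y : A, μ x * ρ y = -(ρ y * μ x))
    (T : V →ₗ[K] A)
    (hT : ∀ u v : V, star (T u) (T v) = T (ρ (T u) v) ∧ star (T u) (T v) = T (μ (T v) u))
    (r l : V → V → V)
    (hr : r = fun u v => ρ (T u) v) (hl : l = fun u v => μ (T v) u) :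
    (∀ u v w : V, l (l u v) w + l u (l v w) = 0) ∧
    (∀ u v w : V, r (r u v) w + r u (r v w) = 0) ∧
    (∀ u v w : V, l (r u v) w + r u (l v w) = 0) :=
  stmt_17_general K A V star ρ μ h1 h2 h3 T hT r l hr hl
end

section
/- Let H: B → A be a homomorphic embedding tensor on a mock-Lie algebra (A, ∘_A) acting on a mock-Lie algebra (B, ∘_B) via π. Then (B, {·,·}_H, ∘_B) with {a,b}_H := π(H(a))b is an anti-Leibniz trialgebra: (B, {·,·}_H) is anti-Leibniz, and {a, b∘_B c}_H + b∘_B {a,c}_H + c∘_B {a,b}_H = 0 and {a∘_B b, c}_H = {{a,b}_H, c}_H hold. -/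
/-!
Writing `{a, b} = π (H a) b`, the anti-Leibniz identity for `{·,·}` is the representation
identity for `π` evaluated at `H a ∘ H b = H {a, b}`; compatibility of `{·,·}` with `∘_B` on the
right is the action axiom at `x = H a`, and on the left it follows from `H (a ∘ b) = H a ∘ H b = H {a, b}`.
-/

theorem embeddingTensor_bracket_antiLeibniz {R A B : Type*} [Semiring R] [AddCommGroup B]
    [Module R B] (mulA : A → A → A) (π : A → Module.End R B) (H : B → A)
    (hrep : ∀ x y : A, π (mulA x y) = -(π x * π y) - π y * π x)
    (hemb : ∀ a b : B, mulA (H a) (H b) = H (π (H a) b)) (a b c : B) :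
    π (H a) (π (H b) c) = -π (H (π (H a) b)) c - π (H b) (π (H a) c) := by
  rw [← hemb, hrep]
  simp [Module.End.mul_apply]

theorem stmt_18_general (K : Type*) [Field K]
    (A : Type*) [AddCommGroup A] [Module K A]
    (B : Type*) [AddCommGroup B] [Module K B]
    (mulA : A →ₗ[K] A →ₗ[K] A)
    (mulB : B →ₗ[K] B →ₗ[K] B)
    (π : A →ₗ[K] Module.End K B)
    (hrep : ∀ x y : A, π (mulA x y) = -(π x * π y) - π y * π x)
    (hact : ∀ (x : A) (a b : B), π x (mulB a b) + mulB a (π x b) + mulB b (π x a) = 0)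
    (H : B →ₗ[K] A)
    (hemb : ∀ a b : B, mulA (H a) (H b) = H (π (H a) b))
    (hmor : ∀ a b : B, H (mulB a b) = mulA (H a) (H b))
    (br : B → B → B) (hbr : br = fun a b => π (H a) b) :
    (∀ a b c : B, br a (br b c) = -(br (br a b) c) - br b (br a c)) ∧
    (∀ a b c : B, br a (mulB b c) + mulB b (br a c) + mulB c (br a b) = 0) ∧
    (∀ a b c : B, br (mulB a b) c = br (br a b) c) := by
  subst hbr
  refine ⟨fun a b c => ?_, fun a b c => hact (H a) b c, fun a b c => ?_⟩
  · exact embeddingTensor_bracket_antiLeibniz (fun x y => mulA x y) π H hrep hemb a b c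
  · simp only [hmor, hemb]

theorem stmt_18 (K : Type*) [Field K] [CharZero K]
    (A : Type*) [AddCommGroup A] [Module K A]
    (B : Type*) [AddCommGroup B] [Module K B]
    (mulA : A →ₗ[K] A →ₗ[K] A)
    (commA : ∀ x y : A, mulA x y = mulA y x)
    (jacobiA : ∀ x y z : A, mulA x (mulA y z) + mulA y (mulA z x) + mulA z (mulA x y) = 0)
    (mulB : B →ₗ[K] B →ₗ[K] B)
    (commB : ∀ a b : B, mulB a b = mulB b a)
    (jacobiB : ∀ a b c : B, mulB a (mulB b c) + mulB b (mulB c a) + mulB c (mulB a b) = 0)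
    (π : A →ₗ[K] Module.End K B)
    (hrep : ∀ x y : A, π (mulA x y) = -(π x * π y) - π y * π x)
    (hact : ∀ (x : A) (a b : B), π x (mulB a b) + mulB a (π x b) + mulB b (π x a) = 0)
    (H : B →ₗ[K] A)
    (hemb : ∀ a b : B, mulA (H a) (H b) = H (π (H a) b))
    (hmor : ∀ a b : B, H (mulB a b) = mulA (H a) (H b))
    (br : B → B → B) (hbr : br = fun a b => π (H a) b) :
    (∀ a b c : B, br a (br b c) = -(br (br a b) c) - br b (br a c)) ∧
    (∀ a b c : B, br a (mulB b c) + mulB b (br a c) + mulB c (br a b) = 0) ∧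
    (∀ a b c : B, br (mulB a b) c = br (br a b) c) :=
  stmt_18_general K A B mulA mulB π hrep hact H hemb hmor br hbr
end
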